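/- Define F : ℝ → ℝ by F(α) = 4√(1+α) + 2√α if α ≤ α₀, F(α) = 4 + 2√(2α) if α₀ < α < 1/2, and F(α) = 2√(6(1+α)) if α ≥ 1/2, where α₀ = (688 − 480√2)/49. Then F is continuous on the interval (0,1], but F is not differentiable at α₀. -/

import Mathlib

/-!
Since `α₀ = ((20 - 12√2)/7)²`, all square roots at `α₀` lie in `ℚ(√2)`: `√(1 + α₀) =
(16√2 - 15)/7` and `√(2α₀) = (20√2 - 24)/7`. Hence the three branches of `F` agree at the
junctions `α₀` and `1/2`, so `F` is continuous, while at `α₀` the left derivative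
`2/√(1 + α₀) + 1/√α₀` exceeds the right derivative `2/√(2α₀)` by `(√2 - 1)/(√α₀ √(1 + α₀))`.
-/

/-- The minimal ℓ¹ double bubble perimeter as a function of the area ratio `α`
(Theorem 1.1, part II). -/
noncomputable def doubleBubblePerimeter (α : ℝ) : ℝ :=
  if α ≤ (688 - 480 * Real.sqrt 2) / 49 then
    4 * Real.sqrt (1 + α) + 2 * Real.sqrt α
  else if α < 1 / 2 then 4 + 2 * Real.sqrt (2 * α)
  else 2 * Real.sqrt (6 * (1 + α))

open Real Set Filter Topology

local notation "α₀" => (688 - 480 * Real.sqrt 2) / 49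

namespace DoubleBubble

noncomputable def lowerBranch (α : ℝ) : ℝ := 4 * √(1 + α) + 2 * √α

noncomputable def middleBranch (α : ℝ) : ℝ := 4 + 2 * √(2 * α)

noncomputable def upperBranch (α : ℝ) : ℝ := 2 * √(6 * (1 + α))

lemma doubleBubblePerimeter_eq (α : ℝ) :
    doubleBubblePerimeter α =
      if α ≤ α₀ then lowerBranch α else if α < 1 / 2 then middleBranch α else upperBranch α :=
  rfl

lemma sqrt_eq_of_eq_sq {x y : ℝ} (hy : 0 ≤ y) (h : x = y ^ 2) : √x = y := by
  rw [h, sqrt_sq hy]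

lemma sqrt_two_mem_Ioo : √2 ∈ Ioo 1.41 1.42 := by
  have h := sq_sqrt (zero_le_two (α := ℝ))
  constructor <;> nlinarith [sqrt_nonneg 2]

lemma sqrt_alpha₀ : √α₀ = (20 - 12 * √2) / 7 :=
  sqrt_eq_of_eq_sq (by linarith [sqrt_two_mem_Ioo.2]) <| by
    linear_combination (-144 / 49 : ℝ) * sq_sqrt (zero_le_two (α := ℝ))

lemma sqrt_one_add_alpha₀ : √(1 + α₀) = (16 * √2 - 15) / 7 :=
  sqrt_eq_of_eq_sq (by linarith [sqrt_two_mem_Ioo.1]) <| by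
    linear_combination (-256 / 49 : ℝ) * sq_sqrt (zero_le_two (α := ℝ))

lemma sqrt_two_mul_alpha₀ : √(2 * α₀) = (20 * √2 - 24) / 7 :=
  sqrt_eq_of_eq_sq (by linarith [sqrt_two_mem_Ioo.1]) <| by
    linear_combination (-400 / 49 : ℝ) * sq_sqrt (zero_le_two (α := ℝ))

lemma alpha₀_pos : 0 < α₀ := by
  linarith [sqrt_two_mem_Ioo.2]

lemma alpha₀_lt_half : α₀ < 1 / 2 := by
  linarith [sqrt_two_mem_Ioo.1]

lemma lowerBranch_alpha₀ : lowerBranch α₀ = middleBranch α₀ := by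
  rw [lowerBranch, middleBranch, sqrt_alpha₀, sqrt_one_add_alpha₀, sqrt_two_mul_alpha₀]
  ring

lemma middleBranch_half : middleBranch (1 / 2) = upperBranch (1 / 2) := by
  rw [middleBranch, upperBranch,
    sqrt_eq_of_eq_sq zero_le_one (by norm_num : (2 : ℝ) * (1 / 2) = 1 ^ 2),
    sqrt_eq_of_eq_sq zero_le_three (by norm_num : (6 : ℝ) * (1 + 1 / 2) = 3 ^ 2)]
  norm_num

lemma continuous_doubleBubblePerimeter : Continuous doubleBubblePerimeter := by
  have hlower : Continuous lowerBranch := by unfold lowerBranch; fun_prop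
  have hmiddle : Continuous middleBranch := by unfold middleBranch; fun_prop
  have hupper : Continuous upperBranch := by unfold upperBranch; fun_prop
  have hupper_middle : Continuous fun α : ℝ =>
      if 1 / 2 ≤ α then upperBranch α else middleBranch α :=
    hupper.if_le hmiddle continuous_const continuous_id fun α (hα : 1 / 2 = α) => by
      rw [← hα, middleBranch_half]
  have hF : doubleBubblePerimeter = fun α : ℝ =>
      if α ≤ α₀ then lowerBranch α else if 1 / 2 ≤ α then upperBranch α else middleBranch α := by
    funext α
    simp only [doubleBubblePerimeter_eq, ← not_le, ite_not]
  rw [hF]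
  exact hlower.if_le hupper_middle continuous_id continuous_const fun α (hα : α = α₀) => by
    rw [hα, if_neg (not_le.2 alpha₀_lt_half), lowerBranch_alpha₀]

lemma hasDerivAt_lowerBranch {α : ℝ} (hα : 0 < α) :
    HasDerivAt lowerBranch (2 / √(1 + α) + 1 / √α) α := by
  have h1 := ((hasDerivAt_id' α).const_add 1).sqrt (by positivity)
  have h2 := (hasDerivAt_id' α).sqrt hα.ne'
  exact ((h1.const_mul 4).add (h2.const_mul 2)).congr_deriv (by field_simp; ring)

lemma hasDerivAt_middleBranch {α : ℝ} (hα : 0 < α) :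
    HasDerivAt middleBranch (2 / √(2 * α)) α := by
  have h := ((hasDerivAt_id' α).const_mul 2).sqrt (by positivity)
  exact ((h.const_mul 2).const_add 4).congr_deriv (by field_simp)

lemma not_differentiableAt_of_hasDerivWithinAt_Iic_Ici {E : Type*} [NormedAddCommGroup E]
    [NormedSpace ℝ E] {f : ℝ → E} {a : ℝ} {f₁ f₂ : E} (h₁ : HasDerivWithinAt f f₁ (Iic a) a)
    (h₂ : HasDerivWithinAt f f₂ (Ici a) a) (hne : f₁ ≠ f₂) : ¬ DifferentiableAt ℝ f a := by
  intro hf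
  have e₁ := (uniqueDiffWithinAt_Iic a).eq_deriv _ h₁ hf.hasDerivAt.hasDerivWithinAt
  have e₂ := (uniqueDiffWithinAt_Ici a).eq_deriv _ h₂ hf.hasDerivAt.hasDerivWithinAt
  exact hne (e₁.trans e₂.symm)

lemma middle_deriv_lt_lower_deriv_alpha₀ : 2 / √(2 * α₀) < 2 / √(1 + α₀) + 1 / √α₀ := by
  have h2 := sq_sqrt (zero_le_two (α := ℝ))
  have hs : 0 < √α₀ := sqrt_pos.2 alpha₀_pos
  have hr : 0 < √(1 + α₀) := sqrt_pos.2 (by linarith [alpha₀_pos])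
  have ht : √(2 * α₀) = √2 * √α₀ := sqrt_mul zero_le_two _
  have hdiff : 2 * √α₀ - (√2 - 1) * √(1 + α₀) = √2 - 1 := by
    rw [sqrt_alpha₀, sqrt_one_add_alpha₀]
    linear_combination (-16 / 7 : ℝ) * h2
  have hjump : √2 * (2 * √α₀ + √(1 + α₀)) - 2 * √(1 + α₀) = 2 - √2 := by
    linear_combination √2 * hdiff + (√(1 + α₀) + 1) * h2
  rw [ht, div_add_div _ _ hr.ne' hs.ne',
    div_lt_div_iff₀ (mul_pos (sqrt_pos.2 zero_lt_two) hs) (mul_pos hr hs)]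
  nlinarith [mul_pos hs (sub_pos.2 (sqrt_two_mem_Ioo.2.trans (by norm_num) : √2 < 2))]

end DoubleBubble

open DoubleBubble in
theorem first_phase_transition :
    ContinuousOn doubleBubblePerimeter (Set.Ioc (0 : ℝ) 1) ∧
      ¬ DifferentiableAt ℝ doubleBubblePerimeter ((688 - 480 * Real.sqrt 2) / 49) := by
  refine ⟨continuous_doubleBubblePerimeter.continuousOn, ?_⟩
  have hleft : HasDerivWithinAt doubleBubblePerimeter (2 / √(1 + α₀) + 1 / √α₀) (Iic α₀) α₀ :=
    (hasDerivAt_lowerBranch alpha₀_pos).hasDerivWithinAt.congr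
      (fun α hα => if_pos hα) (if_pos le_rfl)
  have hright : HasDerivWithinAt doubleBubblePerimeter (2 / √(2 * α₀)) (Ici α₀) α₀ := by
    refine (hasDerivAt_middleBranch alpha₀_pos).hasDerivWithinAt.congr_of_eventuallyEq ?_
      ((if_pos le_rfl).trans lowerBranch_alpha₀)
    filter_upwards [Ico_mem_nhdsGE alpha₀_lt_half] with α hα
    rcases hα.1.eq_or_lt with rfl | hlt
    · exact (if_pos le_rfl).trans lowerBranch_alpha₀
    · exact (if_neg hlt.not_ge).trans (if_pos hα.2)
  exact not_differentiableAt_of_hasDerivWithinAt_Iic_Ici hleft hright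
    middle_deriv_lt_lower_deriv_alpha₀.ne'
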